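/- Let G be a commutative group (written multiplicatively), g : G, and ι a finite index set of attributes. Suppose a, s : ι → ℤ satisfy a i + s i = K for every i, and a_U, s_U : ι → ℤ satisfy a_U i + s_U i = K for every i. Let σ : ι ≃ ι be a permutation, r, ω : ℤ, I_r a finset of ι, Î_r := image of I_r under σ⁻¹. Let T : ι → ℤ be a policy with T i ∈ {−1, 0, 1} for all i, and let the message tuples p : ι → G satisfy: p i = 1 whenever T i = 0, and ∏_{i : T i = 1} p i = M for a message M : G. Assume the receiver satisfies the policy: {i | T i = 1} ⊆ I_r and no i ∈ I_r has T i = −1. Set A := g^r, D := g^(r·ω), B'ᵢ := p(σ i) * g^(a(σ i)·r) * g^(s i·r), AK := (∑_{i ∈ I_r} a_U i) + ω, RK := ∑_{i ∈ I_r} s_U i. Then the full decryption pipeline recovers the message: (D * (∏_{i ∈ Î_r} B'ᵢ) * A^(−(AK + RK))) * (∏_{j ∈ I_r} g^(r·(s j))) * (∏_{i ∈ Î_r} g^(r·(s i)))⁻¹ = M. -/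

import Mathlib

/-!
Decryption reassembles the message share by share: the extracted ciphertexts are indexed by
`σ⁻¹(I_r)`, so after undoing the shuffle their plaintext parts multiply to `∏_{i ∈ I_r} p i`, which
is `M` because a policy-satisfying `I_r` only adds attributes with `p i = 1`. Everything else is a
power of `g`, and its exponent `r (ω + ∑ a + ∑ s - AK - RK)` vanishes because both key splittings
sum to the same master secret `K`; the transformation factors `g^{r s_i}` over `σ⁻¹(I_r)` are
cancelled exactly by the last step of `ProxyDecrypt2`.
-/

open Finset

theorem Finset.prod_zpow_eq_zpow_sum {ι G : Type*} [CommGroup G] (t : Finset ι) (f : ι → ℤ)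
    (g : G) : ∏ i ∈ t, g ^ f i = g ^ ∑ i ∈ t, f i := by
  induction t using Finset.cons_induction with
  | empty => simp
  | cons j t hj ih => rw [prod_cons, sum_cons, ih, zpow_add]

theorem Finset.prod_comp_perm_image_symm {ι M : Type*} [CommMonoid M] [DecidableEq ι]
    (σ : Equiv.Perm ι) (t : Finset ι) (f : ι → M) :
    ∏ i ∈ t.image σ.symm, f (σ i) = ∏ i ∈ t, f i := by
  rw [prod_image σ.symm.injective.injOn]
  simp only [Equiv.apply_symm_apply]

theorem Finset.sum_add_sum_eq_of_add_eq {ι M : Type*} [AddCommMonoid M] (t : Finset ι)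
    {a s b u : ι → M} (h : ∀ i, a i + s i = b i + u i) :
    ∑ i ∈ t, a i + ∑ i ∈ t, s i = ∑ i ∈ t, b i + ∑ i ∈ t, u i := by
  simp only [← sum_add_distrib, h]

theorem prod_eq_prod_required_of_satisfies_policy {ι M : Type*} [Fintype ι] [CommMonoid M]
    {T : ι → ℤ} (hT : ∀ i, T i = -1 ∨ T i = 0 ∨ T i = 1) {p : ι → M}
    (hp0 : ∀ i, T i = 0 → p i = 1) {Ir : Finset ι}
    (hreq : univ.filter (fun i => T i = 1) ⊆ Ir) (hunreq : ∀ i ∈ Ir, T i ≠ -1) :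
    ∏ i ∈ Ir, p i = ∏ i ∈ univ.filter (fun i => T i = 1), p i := by
  refine (prod_subset hreq fun i hi hnreq => hp0 i ?_).symm
  rcases hT i with hneg | hzero | hone
  · exact absurd hneg (hunreq i hi)
  · exact hzero
  · exact absurd (mem_filter.mpr ⟨mem_univ i, hone⟩) hnreq

theorem prod_extracted_transformed_ciphertexts {ι G : Type*} [CommGroup G] [DecidableEq ι]
    (σ : Equiv.Perm ι) (t : Finset ι) (p : ι → G) (g : G) (a s : ι → ℤ) (r : ℤ) :
    ∏ i ∈ t.image σ.symm, p (σ i) * g ^ (a (σ i) * r) * g ^ (s i * r) =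
      (∏ i ∈ t, p i) * g ^ (r * ∑ i ∈ t, a i) * ∏ i ∈ t.image σ.symm, g ^ (r * s i) := by
  calc ∏ i ∈ t.image σ.symm, p (σ i) * g ^ (a (σ i) * r) * g ^ (s i * r)
      = (∏ i ∈ t.image σ.symm, p (σ i) * g ^ (r * a (σ i))) *
          ∏ i ∈ t.image σ.symm, g ^ (r * s i) := by
        simp only [← prod_mul_distrib, mul_comm _ r]
    _ = (∏ i ∈ t, p i) * g ^ (r * ∑ i ∈ t, a i) * ∏ i ∈ t.image σ.symm, g ^ (r * s i) := by
        rw [prod_comp_perm_image_symm σ t fun j => p j * g ^ (r * a j), prod_mul_distrib,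
          prod_zpow_eq_zpow_sum, mul_sum]

/-- End-to-end correctness of the EABEHP scheme: a receiver whose attribute
set `I_r` satisfies the encryption policy `T` (every required attribute is
possessed and no unrequired attribute is possessed) recovers the plaintext
message `M` through the full decryption pipeline. -/
theorem eabehp_full_decryption_correctness
    {G : Type*} [CommGroup G] (g : G)
    {ι : Type*} [Fintype ι] [DecidableEq ι]
    (a s aU sU : ι → ℤ) (K : ℤ)
    (hK : ∀ i, a i + s i = K) (hKU : ∀ i, aU i + sU i = K)
    (σ : Equiv.Perm ι) (r ω : ℤ) (Ir : Finset ι)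
    (Ihat : Finset ι) (hIhat : Ihat = Ir.image σ.symm)
    (T : ι → ℤ) (hT : ∀ i, T i = -1 ∨ T i = 0 ∨ T i = 1)
    (p : ι → G) (M : G)
    (hp0 : ∀ i, T i = 0 → p i = 1)
    (hpM : ∏ i ∈ Finset.univ.filter (fun i => T i = 1), p i = M)
    (hreq : Finset.univ.filter (fun i => T i = 1) ⊆ Ir)
    (hunreq : ∀ i ∈ Ir, T i ≠ -1)
    (A D : G) (hA : A = g ^ r) (hD : D = g ^ (r * ω))
    (B' : ι → G)
    (hB' : ∀ i, B' i = p (σ i) * g ^ (a (σ i) * r) * g ^ (s i * r))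
    (AK RK : ℤ)
    (hAK : AK = (∑ i ∈ Ir, aU i) + ω) (hRK : RK = ∑ i ∈ Ir, sU i) :
    (D * (∏ i ∈ Ihat, B' i) * A ^ (-(AK + RK))) *
        (∏ j ∈ Ir, g ^ (r * s j)) * (∏ i ∈ Ihat, g ^ (r * s i))⁻¹ =
      M := by
  subst hIhat hA hD hAK hRK
  have hmsg : ∏ i ∈ Ir, p i = M :=
    hpM ▸ prod_eq_prod_required_of_satisfies_policy hT hp0 hreq hunreq
  have hexponent : r * ω + r * ∑ i ∈ Ir, a i + r * -(∑ i ∈ Ir, aU i + ω + ∑ i ∈ Ir, sU i)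
      + r * ∑ i ∈ Ir, s i = 0 := by
    linear_combination r * sum_add_sum_eq_of_add_eq Ir fun i => (hK i).trans (hKU i).symm
  have hcollect : ∀ (X : G) (e₁ e₂ e₃ e₄ : ℤ),
      g ^ e₁ * (M * g ^ e₂ * X) * g ^ e₃ * g ^ e₄ * X⁻¹ = M * g ^ (e₁ + e₂ + e₃ + e₄) := by
    intro X e₁ e₂ e₃ e₄
    rw [mul_inv_eq_iff_eq_mul, zpow_add, zpow_add, zpow_add]
    ac_rfl
  simp only [hB']
  rw [prod_extracted_transformed_ciphertexts, hmsg]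
  simp only [prod_zpow_eq_zpow_sum, ← mul_sum, ← zpow_mul]
  rw [hcollect, hexponent, zpow_zero, mul_one]
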